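/- Let u : ℝ_{≥0} → ℝ_{≥0} be such that φ(s) := s·u(s) is nondecreasing, let x_1,…,x_n ∈ ℂ^N span ℂ^N with u positive where needed, and define h_j(q) = (1/N) x_j* ((1/n) Σ_i u(q_i) x_i x_i*)^{-1} x_j. Then h is scalable: for every α > 1 and every j, α h_j(q_1,…,q_n) ≥ h_j(α q_1,…,α q_n). -/

import Mathlib

open Matrix
open scoped ComplexOrder

/-!
Since `s ↦ s u(s)` is nondecreasing and `u(0) ≥ 0` (forced by positive definiteness of `Z 0`),
`u(qᵢ) ≤ α u(α qᵢ)` for every `i`, so `Z q ≤ α Z (α q)` in the Loewner order. Inversion is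
operator antitone on positive definite matrices, hence `Z (α q)⁻¹ ≤ α (Z q)⁻¹`, and evaluating
the quadratic form at `x j` gives the claim.
-/

open scoped MatrixOrder Matrix.Norms.L2Operator

namespace Matrix

variable {m ι : Type*} [Fintype m]

theorem inv_smul₀ {K : Type*} [Field K] [DecidableEq m] (k : K) (A : Matrix m m K) :
    (k • A)⁻¹ = k⁻¹ • A⁻¹ := by
  rcases eq_or_ne k 0 with rfl | hk
  · simp
  by_cases hA : IsUnit A.det
  · exact inv_smul' A (Units.mk0 k hk) hA
  · have hkA : ¬IsUnit (k • A).det := by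
      simpa [det_smul, isUnit_iff_ne_zero, hk] using hA
    rw [nonsing_inv_apply_not_isUnit _ hA, nonsing_inv_apply_not_isUnit _ hkA, smul_zero]

theorem PosDef.inv_le_inv [DecidableEq m] {A B : Matrix m m ℂ} (hA : A.PosDef) (hAB : A ≤ B) :
    B⁻¹ ≤ A⁻¹ := by
  rw [nonsing_inv_eq_ringInverse, nonsing_inv_eq_ringInverse]
  exact CStarAlgebra.ringInverse_le_ringInverse hAB (isStrictlyPositive_iff_posDef.mpr hA)

theorem PosDef.inv_le_smul_inv [DecidableEq m] {A B : Matrix m m ℂ} (hA : A.PosDef) {c : ℝ}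
    (hc : 0 < c) (hAB : A ≤ (c : ℂ) • B) : B⁻¹ ≤ (c : ℂ) • A⁻¹ := by
  have hc' : (c : ℂ) ≠ 0 := Complex.ofReal_ne_zero.mpr hc.ne'
  have := hA.inv_le_inv hAB
  rw [inv_smul₀] at this
  have hc₀ : (0 : ℂ) ≤ c := by exact_mod_cast hc.le
  simpa [smul_smul, hc'] using smul_le_smul_of_nonneg_left this hc₀

theorem re_dotProduct_mulVec_le {A B : Matrix m m ℂ} (hAB : A ≤ B) (v : m → ℂ) :
    (star v ⬝ᵥ A *ᵥ v).re ≤ (star v ⬝ᵥ B *ᵥ v).re := by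
  have h := (le_iff.mp hAB).dotProduct_mulVec_nonneg v
  rw [sub_mulVec, dotProduct_sub, sub_nonneg] at h
  exact (Complex.le_def.mp h).1

variable [Fintype ι]

theorem posSemidef_sum_smul_vecMulVec {c : ι → ℝ} (hc : 0 ≤ c) (x : ι → m → ℂ) :
    (∑ i, (c i : ℂ) • vecMulVec (x i) (star (x i))).PosSemidef :=
  posSemidef_sum _ fun i _ =>
    (posSemidef_vecMulVec_self_star (x i)).smul (by exact_mod_cast hc i)

theorem sum_smul_vecMulVec_mono {c d : ι → ℝ} (hcd : c ≤ d) (x : ι → m → ℂ) :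
    ∑ i, (c i : ℂ) • vecMulVec (x i) (star (x i)) ≤
      ∑ i, (d i : ℂ) • vecMulVec (x i) (star (x i)) := by
  rw [le_iff, ← Finset.sum_sub_distrib]
  simpa only [Pi.sub_apply, Complex.ofReal_sub, sub_smul] using
    posSemidef_sum_smul_vecMulVec (sub_nonneg.mpr hcd) x

theorem pos_of_posDef_ofReal_smul [Nonempty m] {c : ℝ} {G : Matrix m m ℂ} (hG : G.PosSemidef)
    (h : ((c : ℂ) • G).PosDef) : 0 < c := by
  by_contra! hc
  have hneg : (-((c : ℂ) • G)).PosSemidef := by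
    rw [← neg_smul, ← Complex.ofReal_neg]
    exact hG.smul (by exact_mod_cast neg_nonneg.mpr hc)
  obtain ⟨v, hv⟩ := exists_ne (0 : m → ℂ)
  have hle := hneg.dotProduct_mulVec_nonneg v
  rw [neg_mulVec, dotProduct_neg, neg_nonneg] at hle
  exact hle.not_gt (h.dotProduct_mulVec_pos hv)

end Matrix

theorem apply_le_mul_apply_mul {u : ℝ → ℝ} (hφ : ∀ s t, 0 ≤ s → s ≤ t → s * u s ≤ t * u t)
    (hu₀ : 0 ≤ u 0) {α s : ℝ} (hα : 1 ≤ α) (hs : 0 ≤ s) : u s ≤ α * u (α * s) := by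
  rcases hs.eq_or_lt with rfl | hs
  · simpa using mul_le_mul_of_nonneg_right hα hu₀
  · have := hφ s (α * s) hs.le (le_mul_of_one_le_left hs.le hα)
    rw [mul_assoc, mul_left_comm] at this
    exact le_of_mul_le_mul_left this hs

theorem stmt_11_general {N n : ℕ} (hN : 0 < N)
    (u : ℝ → ℝ) (hphi : ∀ s t, 0 ≤ s → s ≤ t → s * u s ≤ t * u t)
    (x : Fin n → Fin N → ℂ)
    (Z : (Fin n → ℝ) → Matrix (Fin N) (Fin N) ℂ)
    (hZdef : ∀ q, Z q = (1 / (n : ℂ)) • ∑ i, (u (q i) : ℂ) • Matrix.vecMulVec (x i) (star (x i)))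
    (hZpos : ∀ q : Fin n → ℝ, (∀ i, 0 ≤ q i) → (Z q).PosDef)
    (h : (Fin n → ℝ) → Fin n → ℝ)
    (hhdef : ∀ q j, h q j = (1 / (N : ℝ)) * (star (x j) ⬝ᵥ (Z q)⁻¹.mulVec (x j)).re)
    (q : Fin n → ℝ) (hq : ∀ i, 0 ≤ q i) (α : ℝ) (hα : 1 < α) :
    ∀ j, h (fun i => α * q i) j ≤ α * h q j := by
  intro j
  have : Nonempty (Fin N) := ⟨⟨0, hN⟩⟩
  have hn_inv : (0 : ℂ) ≤ 1 / (n : ℂ) := by positivity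
  have hu₀ : 0 ≤ u 0 := by
    refine (Matrix.pos_of_posDef_ofReal_smul
      ((Matrix.posSemidef_sum_smul_vecMulVec (fun _ => zero_le_one) x).smul hn_inv) ?_).le
    simpa [hZdef, Finset.smul_sum, smul_comm (u 0 : ℂ)] using hZpos 0 fun _ => le_rfl
  have hZ : Z q ≤ (α : ℂ) • Z (fun i => α * q i) := by
    rw [hZdef, hZdef, smul_comm (α : ℂ), Finset.smul_sum (r := (α : ℂ))]
    simp only [smul_smul, ← Complex.ofReal_mul]
    have hu : ∀ i, u (q i) ≤ α * u (α * q i) := fun i =>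
      apply_le_mul_apply_mul hphi hu₀ hα.le (hq i)
    exact smul_le_smul_of_nonneg_left (Matrix.sum_smul_vecMulVec_mono hu x) hn_inv
  have hZinv := (hZpos q hq).inv_le_smul_inv (by linarith) hZ
  rw [hhdef, hhdef, mul_left_comm]
  refine mul_le_mul_of_nonneg_left ?_ (by positivity)
  simpa [Matrix.smul_mulVec] using Matrix.re_dotProduct_mulVec_le hZinv (x j)

theorem stmt_11 {N n : ℕ} (hN : 0 < N) (hn : 0 < n)
    (u : ℝ → ℝ) (hphi : ∀ s t, 0 ≤ s → s ≤ t → s * u s ≤ t * u t)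
    (x : Fin n → Fin N → ℂ)
    (Z : (Fin n → ℝ) → Matrix (Fin N) (Fin N) ℂ)
    (hZdef : ∀ q, Z q = (1 / (n : ℂ)) • ∑ i, (u (q i) : ℂ) • Matrix.vecMulVec (x i) (star (x i)))
    (hZpos : ∀ q : Fin n → ℝ, (∀ i, 0 ≤ q i) → (Z q).PosDef)
    (h : (Fin n → ℝ) → Fin n → ℝ)
    (hhdef : ∀ q j, h q j = (1 / (N : ℝ)) * (star (x j) ⬝ᵥ (Z q)⁻¹.mulVec (x j)).re)
    (q : Fin n → ℝ) (hq : ∀ i, 0 ≤ q i) (α : ℝ) (hα : 1 < α) :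
    ∀ j, h (fun i => α * q i) j ≤ α * h q j :=
  stmt_11_general hN u hphi x Z hZdef hZpos h hhdef q hq α hα
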